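/- arXiv:2411.15363 — 2 statements merged into one kernel-verified Lean document; each statement's English description precedes it below -/
import Mathlib

section
/- Let Λ be a normal greedoid over a finite alphabet Σ and let ρ be a polymatroid rank function that represents Λ. Then ρ is aligned if and only if for every α ∈ Λ: ρ(α̃) = ρ(κ(α̃)), and there is no y ∈ Σ \ κ(α̃) with 0 < ρ(α̃ ∪ {y}) − ρ(α̃) < 1. -/
namespace PaperPG

def letters {A : Type*} (w : List A) : Set A := {x | x ∈ w}

/-- A greedoid over alphabet `A`: a nonempty simple hereditary language with exchange. -/
structure Greedoid (A : Type*) where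
  lang : Set (List A)
  lang_nonempty : lang.Nonempty
  simple : ∀ w ∈ lang, w.Nodup
  hereditary : ∀ α β : List A, α ++ β ∈ lang → α ∈ lang
  exchange : ∀ α ∈ lang, ∀ β ∈ lang, β.length < α.length →
      ∃ x ∈ letters α, β ++ [x] ∈ lang

/-- Kernel of a flat: union of the letter sets of its members. -/
def flatKernel {A : Type*} (F : Set (List A)) : Set A := {y : A | ∃ β ∈ F, y ∈ β}

namespace Greedoid

variable {A : Type*} (G : Greedoid A)

/-- `X` is feasible if it is the set of letters of a feasible word. -/
def Feasible (X : Set A) : Prop := ∃ α ∈ G.lang, letters α = X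

/-- The interval property. -/
def IntervalProperty : Prop :=
  ∀ X Y Z : Set A, G.Feasible X → G.Feasible Y → G.Feasible Z →
    X ⊆ Y → Y ⊆ Z → ∀ x : A, x ∉ Z →
      G.Feasible (X ∪ {x}) → G.Feasible (Z ∪ {x}) → G.Feasible (Y ∪ {x})

/-- A loop is a letter occurring in no feasible word. -/
def IsLoop (x : A) : Prop := ∀ α ∈ G.lang, x ∉ α

/-- A greedoid is normal if it has no loops. -/
def Normal : Prop := ∀ x : A, ¬ G.IsLoop x

/-- Greedoid rank: maximum length of a feasible word with letters inside `X`. -/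
noncomputable def rank (X : Set A) : ℕ :=
  sSup {n : ℕ | ∃ α ∈ G.lang, letters α ⊆ X ∧ α.length = n}

/-- Greedoid span. -/
def spanR (X : Set A) : Set A := {y : A | G.rank (X ∪ {y}) = G.rank X}

/-- Kernel of a set. -/
def kernel (X : Set A) : Set A :=
  {y : A | ∃ β ∈ G.lang, letters β ⊆ G.spanR X ∧ y ∈ β}

/-- Continuations of a word. -/
def cont (α : List A) : Set A := {x : A | α ++ [x] ∈ G.lang}

/-- The flat (equivalence class under equal continuations) of a word. -/
def flatOf (α : List A) : Set (List A) := {β ∈ G.lang | G.cont β = G.cont α}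

def IsFlat (F : Set (List A)) : Prop := ∃ α ∈ G.lang, F = G.flatOf α


/-- Order on flats: `[α] ⊑ [β]` iff some `αγ ∈ Λ` with `αγ ∼ β`. -/
def flatLE (F F' : Set (List A)) : Prop :=
  ∃ α ∈ F, ∃ γ : List A, α ++ γ ∈ G.lang ∧ (α ++ γ) ∈ F'

def flatLT (F F' : Set (List A)) : Prop := G.flatLE F F' ∧ F ≠ F'

/-- Covering relation on flats. -/
def flatCovBy (F F' : Set (List A)) : Prop :=
  G.flatLT F F' ∧ ∀ E : Set (List A), G.IsFlat E → G.flatLT F E → G.flatLT E F' → False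

/-- `M` is a meet of the flats `F` and `F'`. -/
def IsMeet (M F F' : Set (List A)) : Prop :=
  G.IsFlat M ∧ G.flatLE M F ∧ G.flatLE M F' ∧
    ∀ E : Set (List A), G.IsFlat E → G.flatLE E F → G.flatLE E F' → G.flatLE E M

/-- A basic word: one of maximum length. -/
def Basic (w : List A) : Prop := w ∈ G.lang ∧ ∀ v ∈ G.lang, v.length ≤ w.length

/-- Optimism: every non-loop is a continuation of some prefix of every basic word. -/
def Optimistic : Prop :=
  ∀ y : A, ¬ G.IsLoop y → ∀ w : List A, G.Basic w →
    ∃ i ≤ w.length, y ∈ G.cont (w.take i)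

/-- The greatest representation `ρ♮`. -/
noncomputable def rhoNat (X : Set A) : ℕ :=
  sInf {n : ℕ | ∃ α ∈ G.lang, X ⊆ G.kernel (letters α) ∧ α.length = n}

end Greedoid

/-- A polymatroid rank function: normalized, monotone, submodular. -/
def IsPolymatroid {A : Type*} (ρ : Set A → ℝ) : Prop :=
  ρ ∅ = 0 ∧ (∀ X Y : Set A, X ⊆ Y → ρ X ≤ ρ Y) ∧
    ∀ X Y : Set A, ρ (X ∪ Y) + ρ (X ∩ Y) ≤ ρ X + ρ Y

/-- `ρ` represents `G`: the language consists exactly of the simple words each of whose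
prefixes of length `i` has rank `i`. -/
def Represents {A : Type*} (ρ : Set A → ℝ) (G : Greedoid A) : Prop :=
  ∀ w : List A, w ∈ G.lang ↔
    (w.Nodup ∧ ∀ i : ℕ, i < w.length → ρ (letters (w.take (i + 1))) = (i + 1 : ℝ))

/-- Polymatroid span. -/
def spanP {A : Type*} (ρ : Set A → ℝ) (X : Set A) : Set A :=
  {y : A | ρ (X ∪ {y}) = ρ X}

/-- Closed sets of a polymatroid. -/
def ClosedP {A : Type*} (ρ : Set A → ℝ) (X : Set A) : Prop := spanP ρ X = X

/-- Covering relation on the closed sets of `ρ`, ordered by inclusion. -/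
def closedCovBy {A : Type*} (ρ : Set A → ℝ) (S S' : Set A) : Prop :=
  ClosedP ρ S ∧ ClosedP ρ S' ∧ S ⊂ S' ∧
    ∀ T : Set A, ClosedP ρ T → S ⊂ T → T ⊂ S' → False

/-- Alignment of a representation. -/
def Aligned {A : Type*} (G : Greedoid A) (ρ : Set A → ℝ) : Prop :=
  ∃ φ : Set (List A) → Set A,
    (∀ F, G.IsFlat F → ClosedP ρ (φ F)) ∧
    (∀ F F', G.IsFlat F → G.IsFlat F' → G.flatLE F F' → φ F ⊆ φ F') ∧
    (∀ α ∈ G.lang, ρ (letters α) = ρ (φ (G.flatOf α))) ∧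
    (∀ α ∈ G.lang, letters α ⊆ φ (G.flatOf α)) ∧
    (∀ F F', G.IsFlat F → G.IsFlat F' → G.flatCovBy F F' → closedCovBy ρ (φ F) (φ F'))

/-- The maps `φ* : F ↦ σ_ρ(κ(F))` and `φ_* : S ↦ κ⁻¹(S)` are well-defined order-preserving
maps between the flats of `G` and the closed sets of `ρ` forming a Galois connection in
which `φ*` preserves the covering relation of the flats. -/
def GaloisPair {A : Type*} (G : Greedoid A) (ρ : Set A → ℝ) : Prop :=
  (∀ F, G.IsFlat F → ClosedP ρ (spanP ρ (flatKernel F))) ∧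
  (∀ F F', G.IsFlat F → G.IsFlat F' → G.flatLE F F' →
      spanP ρ (flatKernel F) ⊆ spanP ρ (flatKernel F')) ∧
  (∀ S, ClosedP ρ S → ∃! F, G.IsFlat F ∧ flatKernel F = G.kernel S) ∧
  (∀ S S', ClosedP ρ S → ClosedP ρ S' → S ⊆ S' →
      ∀ F F', G.IsFlat F → flatKernel F = G.kernel S →
        G.IsFlat F' → flatKernel F' = G.kernel S' → G.flatLE F F') ∧
  (∀ F, G.IsFlat F → ∀ S, ClosedP ρ S → ∀ F', G.IsFlat F' → flatKernel F' = G.kernel S →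
      (spanP ρ (flatKernel F) ⊆ S ↔ G.flatLE F F')) ∧
  (∀ F F', G.IsFlat F → G.IsFlat F' → G.flatCovBy F F' →
      closedCovBy ρ (spanP ρ (flatKernel F)) (spanP ρ (flatKernel F')))

/-! ### Auxiliary lemmas for the main theorem -/

section Aux

variable {A : Type*}

lemma letters_nil : letters ([] : List A) = ∅ := by
  ext x; simp [letters]

lemma letters_append (u v : List A) : letters (u ++ v) = letters u ∪ letters v := by
  ext x; simp [letters]

lemma letters_single (x : A) : letters [x] = {x} := by
  ext z; simp [letters]

lemma mem_letters {x : A} {w : List A} : x ∈ letters w ↔ x ∈ w := Iff.rfl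

lemma letters_subset_append (u v : List A) : letters u ⊆ letters (u ++ v) := by
  rw [letters_append]; exact Set.subset_union_left

/-! #### Polymatroid lemmas -/

variable {ρ : Set A → ℝ}

lemma pm_mono (hpm : IsPolymatroid ρ) {X Y : Set A} (h : X ⊆ Y) : ρ X ≤ ρ Y :=
  hpm.2.1 X Y h

lemma pm_marginal (hpm : IsPolymatroid ρ) {X Y : Set A} (h : X ⊆ Y) (a : A) :
    ρ (Y ∪ {a}) - ρ Y ≤ ρ (X ∪ {a}) - ρ X := by
  have hsub := hpm.2.2 (X ∪ {a}) Y
  have h1 : (X ∪ {a}) ∪ Y = Y ∪ {a} := by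
    apply Set.Subset.antisymm
    · rintro z ((hz | hz) | hz)
      · exact Or.inl (h hz)
      · exact Or.inr hz
      · exact Or.inl hz
    · rintro z (hz | hz)
      · exact Or.inr hz
      · exact Or.inl (Or.inr hz)
  have h2 : X ⊆ (X ∪ {a}) ∩ Y := Set.subset_inter Set.subset_union_left h
  have h3 := pm_mono hpm h2
  rw [h1] at hsub
  linarith

lemma pm_union_finset (hpm : IsPolymatroid ρ) (X : Set A) :
    ∀ s : Finset A, ↑s ⊆ spanP ρ X → ρ (X ∪ ↑s) = ρ X := by
  classical
  intro s
  induction s using Finset.induction_on with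
  | empty => intro _; simp
  | @insert a s _ ih =>
    intro hs
    have hins : (↑(insert a s) : Set A) = ↑s ∪ {a} := by
      ext z; simp [or_comm]
    have ha' : a ∈ spanP ρ X := hs (by simp)
    have hss : (↑s : Set A) ⊆ spanP ρ X := fun z hz => hs (by simp [hz])
    have h1 : X ∪ ↑(insert a s) = (X ∪ ↑s) ∪ {a} := by
      rw [hins, Set.union_assoc]
    rw [h1]
    have hm := pm_marginal hpm (Set.subset_union_left : X ⊆ X ∪ ↑s) a
    have h0 : ρ (X ∪ {a}) = ρ X := ha'
    have hmon : ρ (X ∪ ↑s) ≤ ρ ((X ∪ ↑s) ∪ {a}) := pm_mono hpm Set.subset_union_left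
    have hih := ih hss
    linarith

lemma pm_union_span [Fintype A] (hpm : IsPolymatroid ρ) {X Y : Set A}
    (h : Y ⊆ spanP ρ X) : ρ (X ∪ Y) = ρ X := by
  have hfin := Set.toFinite Y
  have := pm_union_finset hpm X hfin.toFinset
    (by rw [Set.Finite.coe_toFinset]; exact h)
  rwa [Set.Finite.coe_toFinset] at this

lemma subset_spanP (hpm : IsPolymatroid ρ) (X : Set A) : X ⊆ spanP ρ X := by
  intro x hx
  show ρ (X ∪ {x}) = ρ X
  rw [Set.union_eq_left.mpr (Set.singleton_subset_iff.mpr hx)]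

lemma rho_spanP [Fintype A] (hpm : IsPolymatroid ρ) (X : Set A) :
    ρ (spanP ρ X) = ρ X := by
  have h1 : X ∪ spanP ρ X = spanP ρ X := Set.union_eq_right.mpr (subset_spanP hpm X)
  rw [← h1]
  exact pm_union_span hpm (subset_refl _)

lemma spanP_mono (hpm : IsPolymatroid ρ) {X Y : Set A} (h : X ⊆ Y) :
    spanP ρ X ⊆ spanP ρ Y := by
  intro a ha
  have hm := pm_marginal hpm h a
  have h0 : ρ (X ∪ {a}) = ρ X := ha
  have h1 : ρ Y ≤ ρ (Y ∪ {a}) := pm_mono hpm Set.subset_union_left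
  show ρ (Y ∪ {a}) = ρ Y
  linarith

lemma spanP_closed [Fintype A] (hpm : IsPolymatroid ρ) (X : Set A) :
    ClosedP ρ (spanP ρ X) := by
  apply Set.Subset.antisymm
  · intro y hy
    have h1 : ρ (spanP ρ X ∪ {y}) = ρ (spanP ρ X) := hy
    show ρ (X ∪ {y}) = ρ X
    have h2 : ρ (X ∪ {y}) ≤ ρ (spanP ρ X ∪ {y}) :=
      pm_mono hpm (Set.union_subset_union_left _ (subset_spanP hpm X))
    have h3 := rho_spanP hpm X
    have h4 : ρ X ≤ ρ (X ∪ {y}) := pm_mono hpm Set.subset_union_left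
    linarith
  · exact subset_spanP hpm _

lemma spanP_subset_closed [Fintype A] (hpm : IsPolymatroid ρ) {X S : Set A}
    (hS : ClosedP ρ S) (h : X ⊆ S) : spanP ρ X ⊆ S := by
  have := spanP_mono hpm h
  rwa [hS] at this

/-! #### Greedoid lemmas -/

namespace Greedoid

variable (G : Greedoid A)

lemma nil_mem : [] ∈ G.lang := by
  obtain ⟨w, hw⟩ := G.lang_nonempty
  exact G.hereditary [] w hw

lemma not_mem_of_append_mem {w : List A} {x : A} (h : w ++ [x] ∈ G.lang) :
    x ∉ letters w := by
  have hnd := G.simple _ h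
  rw [List.nodup_append] at hnd
  intro hx
  exact hnd.2.2 x hx x (List.mem_singleton_self x) rfl

lemma rho_letters (hpm : IsPolymatroid ρ) (hrep : Represents ρ G) {α : List A}
    (hα : α ∈ G.lang) : ρ (letters α) = (α.length : ℝ) := by
  obtain ⟨hnd, hpre⟩ := (hrep α).1 hα
  rcases Nat.eq_zero_or_pos α.length with h0 | hpos
  · have : α = [] := List.length_eq_zero_iff.mp h0
    subst this
    simp [letters_nil, hpm.1]
  · have hi := hpre (α.length - 1) (by omega)
    have he : α.length - 1 + 1 = α.length := by omega
    rw [he, List.take_length] at hi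
    rw [hi]
    push_cast [he]
    rw [← he]
    push_cast
    ring

lemma rank_set_nonempty (X : Set A) :
    Set.Nonempty {n : ℕ | ∃ α ∈ G.lang, letters α ⊆ X ∧ α.length = n} :=
  ⟨0, [], G.nil_mem, by rw [letters_nil]; exact Set.empty_subset _, rfl⟩

lemma rank_set_bdd [Fintype A] (X : Set A) :
    BddAbove {n : ℕ | ∃ α ∈ G.lang, letters α ⊆ X ∧ α.length = n} := by
  refine ⟨Fintype.card A, ?_⟩
  rintro n ⟨α, hα, -, rfl⟩
  exact (G.simple α hα).length_le_card

lemma exists_rank [Fintype A] (X : Set A) :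
    ∃ α ∈ G.lang, letters α ⊆ X ∧ α.length = G.rank X :=
  Nat.sSup_mem (G.rank_set_nonempty X) (G.rank_set_bdd X)

lemma le_rank [Fintype A] {X : Set A} {α : List A} (hα : α ∈ G.lang)
    (h : letters α ⊆ X) : α.length ≤ G.rank X :=
  le_csSup (G.rank_set_bdd X) ⟨α, hα, h, rfl⟩

lemma rank_letters [Fintype A] (hpm : IsPolymatroid ρ) (hrep : Represents ρ G)
    {α : List A} (hα : α ∈ G.lang) : G.rank (letters α) = α.length := by
  refine le_antisymm ?_ (G.le_rank hα (subset_refl _))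
  obtain ⟨β, hβ, hsub, hlen⟩ := G.exists_rank (letters α)
  rw [← hlen]
  have h1 : ρ (letters β) ≤ ρ (letters α) := pm_mono hpm hsub
  rw [G.rho_letters hpm hrep hβ, G.rho_letters hpm hrep hα] at h1
  exact_mod_cast h1

lemma mem_spanR_iff [Fintype A] (hpm : IsPolymatroid ρ) (hrep : Represents ρ G)
    {α : List A} (hα : α ∈ G.lang) (y : A) :
    y ∈ G.spanR (letters α) ↔ α ++ [y] ∉ G.lang := by
  constructor
  · intro h hy
    have h1 : letters (α ++ [y]) ⊆ letters α ∪ {y} := by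
      rw [letters_append, letters_single]
    have h2 := G.le_rank hy h1
    have h3 : G.rank (letters α ∪ {y}) = G.rank (letters α) := h
    rw [h3, G.rank_letters hpm hrep hα, List.length_append] at h2
    simp only [List.length_singleton] at h2
    omega
  · intro hy
    show G.rank (letters α ∪ {y}) = G.rank (letters α)
    obtain ⟨β, hβ, hsub, hlen⟩ := G.exists_rank (letters α ∪ {y})
    have hβle : β.length ≤ α.length := by
      by_contra hgt
      push_neg at hgt
      have hβ'mem : β.take (α.length + 1) ∈ G.lang :=
        G.hereditary _ (β.drop (α.length + 1))
          (by rw [List.take_append_drop]; exact hβ)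
      have hβ'len : (β.take (α.length + 1)).length = α.length + 1 := by
        rw [List.length_take]; omega
      obtain ⟨x, hx, hαx⟩ := G.exchange _ hβ'mem α hα (by omega)
      have hxny : x ∉ letters α := G.not_mem_of_append_mem hαx
      have hxmem : x ∈ letters α ∪ {y} :=
        hsub (show x ∈ letters β from List.take_subset _ _ hx)
      rcases hxmem with h | h
      · exact hxny h
      · have hxy : x = y := h
        rw [hxy] at hαx
        exact hy hαx
    apply le_antisymm
    · calc G.rank (letters α ∪ {y}) = β.length := hlen.symm
        _ ≤ α.length := hβle
        _ = G.rank (letters α) := (G.rank_letters hpm hrep hα).symm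
    · rw [G.rank_letters hpm hrep hα]
      exact G.le_rank hα Set.subset_union_left

lemma spanR_eq [Fintype A] (hpm : IsPolymatroid ρ) (hrep : Represents ρ G)
    {α : List A} (hα : α ∈ G.lang) : G.spanR (letters α) = (G.cont α)ᶜ := by
  ext y
  rw [G.mem_spanR_iff hpm hrep hα y]
  rfl

lemma kernel_eq_of_cont_eq [Fintype A] (hpm : IsPolymatroid ρ) (hrep : Represents ρ G)
    {α β : List A} (hα : α ∈ G.lang) (hβ : β ∈ G.lang) (h : G.cont α = G.cont β) :
    G.kernel (letters α) = G.kernel (letters β) := by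
  unfold kernel
  rw [G.spanR_eq hpm hrep hα, G.spanR_eq hpm hrep hβ, h]

lemma letters_subset_spanR [Fintype A] (hpm : IsPolymatroid ρ) (hrep : Represents ρ G)
    {α : List A} (hα : α ∈ G.lang) : letters α ⊆ G.spanR (letters α) := by
  rw [G.spanR_eq hpm hrep hα]
  intro x hx hc
  exact G.not_mem_of_append_mem hc hx

lemma letters_subset_kernel [Fintype A] (hpm : IsPolymatroid ρ) (hrep : Represents ρ G)
    {α : List A} (hα : α ∈ G.lang) : letters α ⊆ G.kernel (letters α) :=
  fun y hy => ⟨α, hα, G.letters_subset_spanR hpm hrep hα, hy⟩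

lemma avoid_length_le {α β : List A} (hα : α ∈ G.lang) (hβ : β ∈ G.lang)
    (hav : ∀ x ∈ letters β, α ++ [x] ∉ G.lang) : β.length ≤ α.length := by
  by_contra h
  obtain ⟨x, hx, hc⟩ := G.exchange β hβ α hα (lt_of_not_ge h)
  exact hav x hx hc

lemma exchange_extend {α : List A} (hα : α ∈ G.lang) :
    ∀ n (β : List A), β ∈ G.lang → (∀ x ∈ letters β, α ++ [x] ∉ G.lang) →
      α.length - β.length ≤ n →
      ∃ δ ∈ G.lang, letters β ⊆ letters δ ∧ (∀ x ∈ letters δ, α ++ [x] ∉ G.lang) ∧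
        δ.length = α.length := by
  intro n
  induction n with
  | zero =>
    intro β hβ hav hle
    have hlen2 : β.length ≤ α.length := G.avoid_length_le hα hβ hav
    exact ⟨β, hβ, subset_rfl, hav, by omega⟩
  | succ n ih =>
    intro β hβ hav hle
    have hlen2 : β.length ≤ α.length := G.avoid_length_le hα hβ hav
    rcases eq_or_lt_of_le hlen2 with heq | hlt
    · exact ⟨β, hβ, subset_rfl, hav, heq⟩
    · obtain ⟨x, hx, hβx⟩ := G.exchange α hα β hβ hlt
      have hav' : ∀ z ∈ letters (β ++ [x]), α ++ [z] ∉ G.lang := by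
        intro z hz
        rw [letters_append, letters_single] at hz
        rcases hz with hz | hz
        · exact hav z hz
        · have : z = x := hz
          subst this
          intro hc
          exact G.not_mem_of_append_mem hc hx
      obtain ⟨δ, hδ, hsub, hav2, hlen⟩ := ih (β ++ [x]) hβx hav'
        (by rw [List.length_append, List.length_singleton]; omega)
      exact ⟨δ, hδ, fun z hz => hsub (by rw [letters_append]; exact Or.inl hz),
        hav2, hlen⟩

lemma cont_eq_of_max {α δ : List A} (hα : α ∈ G.lang) (hδ : δ ∈ G.lang)
    (hav : ∀ x ∈ letters δ, α ++ [x] ∉ G.lang) (hlen : δ.length = α.length) :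
    G.cont δ = G.cont α := by
  have hsub : G.cont δ ⊆ G.cont α := by
    intro x hx
    by_contra hxc
    have hav' : ∀ z ∈ letters (δ ++ [x]), α ++ [z] ∉ G.lang := by
      intro z hz
      rw [letters_append, letters_single] at hz
      rcases hz with hz | hz
      · exact hav z hz
      · have : z = x := hz
        subst this
        exact hxc
    have hle := G.avoid_length_le hα hx hav'
    rw [List.length_append, List.length_singleton] at hle
    omega
  apply Set.Subset.antisymm hsub
  intro x hx
  have hlt : δ.length < (α ++ [x]).length := by
    rw [List.length_append, List.length_singleton]; omega
  obtain ⟨z, hz, hδz⟩ := G.exchange (α ++ [x]) hx δ hδ hlt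
  have hzc : z ∈ G.cont α := hsub hδz
  rw [letters_append, letters_single] at hz
  rcases hz with hz | hz
  · exact absurd hz (G.not_mem_of_append_mem hzc)
  · have : z = x := hz
    subst this
    exact hδz

lemma kernel_flat [Fintype A] (hpm : IsPolymatroid ρ) (hrep : Represents ρ G)
    {α : List A} (hα : α ∈ G.lang) {y : A} (hy : y ∈ G.kernel (letters α)) :
    ∃ δ ∈ G.lang, G.cont δ = G.cont α ∧ y ∈ letters δ := by
  obtain ⟨β, hβ, hsub, hyβ⟩ := hy
  have hav : ∀ x ∈ letters β, α ++ [x] ∉ G.lang := by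
    intro x hx
    have h1 := hsub hx
    rw [G.spanR_eq hpm hrep hα] at h1
    exact h1
  obtain ⟨δ, hδ, hsubδ, hav2, hlen⟩ := G.exchange_extend hα α.length β hβ hav (by omega)
  exact ⟨δ, hδ, G.cont_eq_of_max hα hδ hav2 hlen, hsubδ hyβ⟩

lemma exists_max_ext [Fintype A] :
    ∀ n (α : List A), α ∈ G.lang → Fintype.card A - α.length ≤ n →
      ∃ γ, α ++ γ ∈ G.lang ∧ G.cont (α ++ γ) = ∅ := by
  intro n
  induction n with
  | zero =>
    intro α hα hle
    refine ⟨[], by simpa using hα, ?_⟩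
    rw [List.append_nil]
    ext x
    simp only [Set.mem_empty_iff_false, iff_false]
    intro hx
    have := (G.simple _ hx).length_le_card
    rw [List.length_append, List.length_singleton] at this
    omega
  | succ n ih =>
    intro α hα hle
    by_cases hc : G.cont α = ∅
    · exact ⟨[], by simpa using hα, by rwa [List.append_nil]⟩
    · obtain ⟨x, hx⟩ := Set.nonempty_iff_ne_empty.mpr hc
      have hxl : α ++ [x] ∈ G.lang := hx
      have hlen : α.length < Fintype.card A := by
        have := (G.simple _ hxl).length_le_card
        rw [List.length_append, List.length_singleton] at this
        omega
      obtain ⟨γ, h1, h2⟩ := ih (α ++ [x]) hxl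
        (by rw [List.length_append, List.length_singleton]; omega)
      have he : α ++ x :: γ = (α ++ [x]) ++ γ := by
        rw [List.append_assoc]; rfl
      exact ⟨x :: γ, by rw [he]; exact h1, by rw [he]; exact h2⟩

lemma length_eq_of_cont_eq {α β : List A} (hα : α ∈ G.lang) (hβ : β ∈ G.lang)
    (h : G.cont α = G.cont β) : α.length = β.length := by
  have key : ∀ u v : List A, u ∈ G.lang → v ∈ G.lang → G.cont u = G.cont v →
      ¬ v.length < u.length := by
    intro u v hu hv huv hlt
    obtain ⟨x, hx, hc⟩ := G.exchange u hu v hv hlt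
    have hxc : x ∈ G.cont v := hc
    rw [← huv] at hxc
    exact G.not_mem_of_append_mem hxc hx
  have h1 := key α β hα hβ h
  have h2 := key β α hβ hα h.symm
  omega

lemma mem_flatOf_self {α : List A} (hα : α ∈ G.lang) : α ∈ G.flatOf α := ⟨hα, rfl⟩

lemma flatOf_eq_of_cont_eq {α β : List A} (h : G.cont β = G.cont α) :
    G.flatOf β = G.flatOf α := by
  unfold flatOf
  rw [h]

lemma flatOf_eq_of_mem {α β : List A} (h : β ∈ G.flatOf α) :
    G.flatOf β = G.flatOf α :=
  G.flatOf_eq_of_cont_eq h.2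

lemma mem_lang_of_mem_flatOf {α β : List A} (h : β ∈ G.flatOf α) : β ∈ G.lang := h.1

lemma cover_step {δ : List A} {x : A} (hδ : δ ∈ G.lang) (hx : δ ++ [x] ∈ G.lang)
    (hne : G.flatOf δ ≠ G.flatOf (δ ++ [x])) :
    G.flatCovBy (G.flatOf δ) (G.flatOf (δ ++ [x])) := by
  constructor
  · exact ⟨⟨δ, G.mem_flatOf_self hδ, [x], hx, G.mem_flatOf_self hx⟩, hne⟩
  · rintro E ⟨ε, hε, rfl⟩ ⟨⟨α₀, hα₀, γ, hγ, hγE⟩, hne1⟩ ⟨⟨ε₀, hε₀, γ', hγ', hγ'F⟩, hne2⟩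
    have hlα₀ : α₀.length = δ.length :=
      G.length_eq_of_cont_eq hα₀.1 hδ hα₀.2
    have hlE : (α₀ ++ γ).length = ε₀.length := by
      have h1 := G.length_eq_of_cont_eq hγE.1 hε hγE.2
      have h2 := G.length_eq_of_cont_eq hε₀.1 hε hε₀.2
      omega
    have hlF : (ε₀ ++ γ').length = (δ ++ [x]).length :=
      G.length_eq_of_cont_eq hγ'F.1 hx hγ'F.2
    have hγne : γ ≠ [] := by
      rintro rfl
      rw [List.append_nil] at hγE
      exact hne1 ((G.flatOf_eq_of_mem hα₀).symm.trans (G.flatOf_eq_of_mem hγE))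
    have hγ'ne : γ' ≠ [] := by
      rintro rfl
      rw [List.append_nil] at hγ'F
      exact hne2 ((G.flatOf_eq_of_mem hε₀).symm.trans (G.flatOf_eq_of_mem hγ'F))
    have l1 : 1 ≤ γ.length := List.length_pos_iff.mpr hγne
    have l2 : 1 ≤ γ'.length := List.length_pos_iff.mpr hγ'ne
    rw [List.length_append] at hlE hlF
    rw [List.length_append, List.length_singleton] at hlF
    omega

lemma cover_struct {F F' : Set (List A)} (hF : G.IsFlat F) (hF' : G.IsFlat F')
    (hcov : G.flatCovBy F F') :
    ∃ α x, α ∈ G.lang ∧ α ++ [x] ∈ G.lang ∧ F = G.flatOf α ∧ F' = G.flatOf (α ++ [x]) := by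
  obtain ⟨⟨α₀, hα₀F, γ, hγΛ, hγF'⟩, hne⟩ := hcov.1
  obtain ⟨ε, hε, rfl⟩ := hF
  obtain ⟨ε', hε', rfl⟩ := hF'
  have hFα : G.flatOf ε = G.flatOf α₀ := (G.flatOf_eq_of_mem hα₀F).symm
  have hF'γ : G.flatOf ε' = G.flatOf (α₀ ++ γ) := (G.flatOf_eq_of_mem hγF').symm
  have hα₀l : α₀ ∈ G.lang := hα₀F.1
  match γ, hγΛ, hγF', hF'γ with
  | [], hγΛ, hγF', hF'γ =>
    exfalso
    apply hne
    rw [List.append_nil] at hF'γ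
    rw [hFα, hF'γ]
  | [g], hγΛ, hγF', hF'γ => exact ⟨α₀, g, hα₀l, hγΛ, hFα, hF'γ⟩
  | g :: g₂ :: rest, hγΛ, hγF', hF'γ =>
    exfalso
    have hassoc : α₀ ++ g :: g₂ :: rest = (α₀ ++ [g]) ++ (g₂ :: rest) := by
      rw [List.append_assoc]; rfl
    have hg : α₀ ++ [g] ∈ G.lang := by
      apply G.hereditary _ (g₂ :: rest)
      rw [← hassoc]; exact hγΛ
    have hEflat : G.IsFlat (G.flatOf (α₀ ++ [g])) := ⟨α₀ ++ [g], hg, rfl⟩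
    have hlt1 : G.flatLT (G.flatOf ε) (G.flatOf (α₀ ++ [g])) := by
      constructor
      · exact ⟨α₀, hα₀F, [g], hg, G.mem_flatOf_self hg⟩
      · intro heq
        have : α₀ ∈ G.flatOf (α₀ ++ [g]) := by rw [← heq]; exact hα₀F
        have := G.length_eq_of_cont_eq this.1 hg this.2
        rw [List.length_append, List.length_singleton] at this
        omega
    have hlt2 : G.flatLT (G.flatOf (α₀ ++ [g])) (G.flatOf ε') := by
      constructor
      · refine ⟨α₀ ++ [g], G.mem_flatOf_self hg, g₂ :: rest, ?_, ?_⟩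
        · rw [← hassoc]; exact hγΛ
        · rw [← hassoc]; exact hγF'
      · intro heq
        have hmem : α₀ ++ g :: g₂ :: rest ∈ G.flatOf (α₀ ++ [g]) := by
          rw [heq]; exact hγF'
        have := G.length_eq_of_cont_eq hmem.1 hg hmem.2
        rw [List.length_append, List.length_append, List.length_singleton,
          List.length_cons, List.length_cons] at this
        omega
    exact hcov.2 _ hEflat hlt1 hlt2

end Greedoid

end Aux

section Main

variable {A : Type*} [Fintype A] {G : Greedoid A} {ρ : Set A → ℝ}

/-- The candidate kernel set of a flat, as a function of the flat. -/
def phiSet (G : Greedoid A) (F : Set (List A)) : Set A :=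
  {y | ∃ β, β ∈ F ∧ β ∈ G.lang ∧ y ∈ G.kernel (letters β)}

lemma phiSet_flatOf (hpm : IsPolymatroid ρ) (hrep : Represents ρ G) {α : List A}
    (hα : α ∈ G.lang) : phiSet G (G.flatOf α) = G.kernel (letters α) := by
  ext y
  constructor
  · rintro ⟨β, hβF, hβ, hy⟩
    rwa [G.kernel_eq_of_cont_eq hpm hrep hβ hα hβF.2] at hy
  · intro hy
    exact ⟨α, G.mem_flatOf_self hα, hα, hy⟩

lemma kernel_subset_spanP (hpm : IsPolymatroid ρ) (hrep : Represents ρ G)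
    (hC1 : ∀ α ∈ G.lang, ρ (letters α) = ρ (G.kernel (letters α)))
    {α : List A} (hα : α ∈ G.lang) :
    G.kernel (letters α) ⊆ spanP ρ (letters α) := by
  intro y hy
  show ρ (letters α ∪ {y}) = ρ (letters α)
  apply le_antisymm
  · have hsub : letters α ∪ {y} ⊆ G.kernel (letters α) :=
      Set.union_subset (G.letters_subset_kernel hpm hrep hα)
        (Set.singleton_subset_iff.mpr hy)
    calc ρ (letters α ∪ {y}) ≤ ρ (G.kernel (letters α)) := pm_mono hpm hsub
      _ = ρ (letters α) := (hC1 α hα).symm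
  · exact pm_mono hpm Set.subset_union_left

lemma span_kernel_mono (hpm : IsPolymatroid ρ) (hrep : Represents ρ G)
    (hC1 : ∀ α ∈ G.lang, ρ (letters α) = ρ (G.kernel (letters α)))
    {α γ : List A} (hα : α ∈ G.lang) (hγ : α ++ γ ∈ G.lang) :
    spanP ρ (G.kernel (letters α)) ⊆ spanP ρ (G.kernel (letters (α ++ γ))) := by
  have hker : G.kernel (letters α) ⊆ spanP ρ (G.kernel (letters (α ++ γ))) := by
    intro y hy
    have h1 : y ∈ spanP ρ (letters α) := kernel_subset_spanP hpm hrep hC1 hα hy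
    have h2 := spanP_mono hpm (letters_subset_append α γ) h1
    exact spanP_mono hpm (G.letters_subset_kernel hpm hrep hγ) h2
  exact spanP_subset_closed hpm (spanP_closed hpm _) hker

end Main

/-- A representation is aligned iff for every feasible word `α`:
`ρ(α̃) = ρ(κ(α̃))` and no `y ∉ κ(α̃)` has marginal return strictly between 0 and 1. -/
theorem aligned_iff_marginal {A : Type*} [Fintype A] (G : Greedoid A)
    (hnorm : G.Normal) (ρ : Set A → ℝ)
    (hpm : IsPolymatroid ρ) (hrep : Represents ρ G) :
    Aligned G ρ ↔
      ∀ α ∈ G.lang,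
        ρ (letters α) = ρ (G.kernel (letters α)) ∧
        ¬ ∃ y : A, y ∉ G.kernel (letters α) ∧
            0 < ρ (letters α ∪ {y}) - ρ (letters α) ∧
            ρ (letters α ∪ {y}) - ρ (letters α) < 1 := by
  constructor
  · -- Aligned → conditions
    rintro ⟨φ, hφ1, hφ2, hφ3, hφ4, hφ5⟩ α hα
    have ker_sub : ∀ β ∈ G.lang, G.kernel (letters β) ⊆ φ (G.flatOf β) := by
      intro β hβ y hy
      obtain ⟨δ, hδ, hcont, hyδ⟩ := G.kernel_flat hpm hrep hβ hy
      have h1 := hφ4 δ hδ hyδ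
      rwa [G.flatOf_eq_of_cont_eq hcont] at h1
    constructor
    · apply le_antisymm
      · exact pm_mono hpm (G.letters_subset_kernel hpm hrep hα)
      · calc ρ (G.kernel (letters α)) ≤ ρ (φ (G.flatOf α)) :=
              pm_mono hpm (ker_sub α hα)
          _ = ρ (letters α) := (hφ3 α hα).symm
    · rintro ⟨y, hyk, hpos, hlt⟩
      obtain ⟨γ, hγ, hγc⟩ := G.exists_max_ext (Fintype.card A) α hα (by omega)
      have hδmem : ∀ i, α ++ γ.take i ∈ G.lang := by
        intro i
        apply G.hereditary _ (γ.drop i)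
        rw [List.append_assoc, List.take_append_drop]
        exact hγ
      have hP0 : y ∉ φ (G.flatOf α) := by
        intro hyφ
        have h1 : letters α ∪ {y} ⊆ φ (G.flatOf α) :=
          Set.union_subset (hφ4 α hα) (Set.singleton_subset_iff.mpr hyφ)
        have h2 : ρ (letters α ∪ {y}) ≤ ρ (φ (G.flatOf α)) := pm_mono hpm h1
        rw [← hφ3 α hα] at h2
        linarith
      classical
      have hex : ∃ i, y ∈ φ (G.flatOf (α ++ γ.take i)) := by
        refine ⟨γ.length, ?_⟩
        rw [List.take_length]
        apply ker_sub _ hγ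
        obtain ⟨w, hw, hyw⟩ : ∃ w ∈ G.lang, y ∈ w := by
          by_contra hcon
          push_neg at hcon
          exact hnorm y hcon
        refine ⟨w, hw, ?_, hyw⟩
        rw [G.spanR_eq hpm hrep hγ, hγc]
        simp
      set j := Nat.find hex with hjdef
      have hjspec : y ∈ φ (G.flatOf (α ++ γ.take j)) := Nat.find_spec hex
      have hjle : j ≤ γ.length := Nat.find_min' hex (by
        rw [List.take_length]
        apply ker_sub _ hγ
        obtain ⟨w, hw, hyw⟩ : ∃ w ∈ G.lang, y ∈ w := by
          by_contra hcon
          push_neg at hcon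
          exact hnorm y hcon
        refine ⟨w, hw, ?_, hyw⟩
        rw [G.spanR_eq hpm hrep hγ, hγc]
        simp)
      have hjne : j ≠ 0 := by
        intro h
        have h0' := hjspec
        rw [h, List.take_zero, List.append_nil] at h0'
        exact hP0 h0'
      obtain ⟨m, hm⟩ := Nat.exists_eq_succ_of_ne_zero hjne
      have hmlt : m < γ.length := by omega
      have hmnot : y ∉ φ (G.flatOf (α ++ γ.take m)) :=
        Nat.find_min hex (by omega)
      set δ := α ++ γ.take m with hδdef
      have hδ : δ ∈ G.lang := hδmem m
      set x := γ.get ⟨m, hmlt⟩ with hxdef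
      have heq : α ++ γ.take (m + 1) = δ ++ [x] := by
        rw [hδdef, List.append_assoc]
        congr 1
        rw [← List.take_concat_get hmlt, List.concat_eq_append]
        rfl
      have hδx : δ ++ [x] ∈ G.lang := by rw [← heq]; exact hδmem (m + 1)
      have hyin : y ∈ φ (G.flatOf (δ ++ [x])) := by
        rw [← heq]
        have := hjspec
        rwa [hm] at this
      have hneq : G.flatOf δ ≠ G.flatOf (δ ++ [x]) := by
        intro h
        rw [← h] at hyin
        exact hmnot hyin
      have hcov := G.cover_step hδ hδx hneq
      have hccov := hφ5 _ _ ⟨δ, hδ, rfl⟩ ⟨δ ++ [x], hδx, rfl⟩ hcov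
      have hφsub : φ (G.flatOf δ) ⊆ φ (G.flatOf (δ ++ [x])) :=
        hφ2 _ _ ⟨δ, hδ, rfl⟩ ⟨δ ++ [x], hδx, rfl⟩
          ⟨δ, G.mem_flatOf_self hδ, [x], hδx, G.mem_flatOf_self hδx⟩
      set T := spanP ρ (φ (G.flatOf δ) ∪ {y}) with hT
      have hTc : ClosedP ρ T := spanP_closed hpm _
      have hyT : y ∈ T := subset_spanP hpm _ (Or.inr rfl)
      have hss1 : φ (G.flatOf δ) ⊂ T := by
        rw [Set.ssubset_iff_subset_ne]
        constructor
        · exact Set.subset_union_left.trans (subset_spanP hpm _)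
        · intro h
          apply hmnot
          rw [h]
          exact hyT
      have hunion_sub : φ (G.flatOf δ) ∪ {y} ⊆ φ (G.flatOf (δ ++ [x])) :=
        Set.union_subset hφsub (Set.singleton_subset_iff.mpr hyin)
      have hTsub : T ⊆ φ (G.flatOf (δ ++ [x])) :=
        spanP_subset_closed hpm (hφ1 _ ⟨δ ++ [x], hδx, rfl⟩) hunion_sub
      have hαsubδ : letters α ⊆ φ (G.flatOf δ) :=
        (letters_subset_append α (γ.take m)).trans (hφ4 δ hδ)
      have hρδ : ρ (φ (G.flatOf δ)) = (δ.length : ℝ) := by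
        rw [← hφ3 δ hδ]
        exact G.rho_letters hpm hrep hδ
      have hρδx : ρ (φ (G.flatOf (δ ++ [x]))) = (δ.length : ℝ) + 1 := by
        rw [← hφ3 _ hδx, G.rho_letters hpm hrep hδx, List.length_append,
          List.length_singleton]
        push_cast
        ring
      have hmarg := pm_marginal hpm hαsubδ y
      have hρT : ρ T = ρ (φ (G.flatOf δ) ∪ {y}) := rho_spanP hpm _
      have hρTlt : ρ T < ρ (φ (G.flatOf (δ ++ [x]))) := by
        rw [hρT, hρδx]
        linarith
      have hss2 : T ⊂ φ (G.flatOf (δ ++ [x])) := by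
        rw [Set.ssubset_iff_subset_ne]
        exact ⟨hTsub, fun h => by rw [h] at hρTlt; exact lt_irrefl _ hρTlt⟩
      exact hccov.2.2.2 T hTc hss1 hss2
  · -- conditions → Aligned
    intro hC
    have hC1 : ∀ α ∈ G.lang, ρ (letters α) = ρ (G.kernel (letters α)) :=
      fun α hα => (hC α hα).1
    refine ⟨fun F => spanP ρ (phiSet G F), ?_, ?_, ?_, ?_, ?_⟩
    · intro F _
      exact spanP_closed hpm _
    · rintro F F' hF hF' ⟨α₀, hα₀F, γ, hγ, hγF'⟩
      dsimp only
      obtain ⟨ε, hε, rfl⟩ := hF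
      obtain ⟨ε', hε', rfl⟩ := hF'
      have hα₀ : α₀ ∈ G.lang := hα₀F.1
      have hFeq : G.flatOf ε = G.flatOf α₀ := (G.flatOf_eq_of_mem hα₀F).symm
      have hF'eq : G.flatOf ε' = G.flatOf (α₀ ++ γ) := (G.flatOf_eq_of_mem hγF').symm
      rw [hFeq, hF'eq, phiSet_flatOf hpm hrep hα₀, phiSet_flatOf hpm hrep hγ]
      exact span_kernel_mono hpm hrep hC1 hα₀ hγ
    · intro α hα
      dsimp only
      rw [phiSet_flatOf hpm hrep hα, rho_spanP hpm, hC1 α hα]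
    · intro α hα
      dsimp only
      rw [phiSet_flatOf hpm hrep hα]
      exact (G.letters_subset_kernel hpm hrep hα).trans (subset_spanP hpm _)
    · intro F F' hF hF' hcov
      obtain ⟨α, x, hα, hαx, rfl, rfl⟩ := G.cover_struct hF hF' hcov
      dsimp only [closedCovBy]
      rw [phiSet_flatOf hpm hrep hα, phiSet_flatOf hpm hrep hαx]
      set S := spanP ρ (G.kernel (letters α)) with hSdef
      set S' := spanP ρ (G.kernel (letters (α ++ [x]))) with hS'def
      have hρS : ρ S = (α.length : ℝ) := by
        rw [hSdef, rho_spanP hpm, ← hC1 α hα, G.rho_letters hpm hrep hα]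
      have hρS' : ρ S' = (α.length : ℝ) + 1 := by
        rw [hS'def, rho_spanP hpm, ← hC1 _ hαx, G.rho_letters hpm hrep hαx,
          List.length_append, List.length_singleton]
        push_cast
        ring
      have hsub : S ⊆ S' := span_kernel_mono hpm hrep hC1 hα hαx
      have hScl : ClosedP ρ S := spanP_closed hpm _
      have hS'cl : ClosedP ρ S' := spanP_closed hpm _
      have hαS : letters α ⊆ S :=
        (G.letters_subset_kernel hpm hrep hα).trans (subset_spanP hpm _)
      refine ⟨hScl, hS'cl, ?_, ?_⟩
      · rw [Set.ssubset_iff_subset_ne]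
        refine ⟨hsub, fun h => ?_⟩
        rw [h, hρS'] at hρS
        linarith
      · intro T hT h1 h2
        obtain ⟨z, hzT, hzS⟩ := Set.exists_of_ssubset h1
        have hρT1 : ρ S < ρ T := by
          have hne : ρ (S ∪ {z}) ≠ ρ S := fun h => hzS (by rw [← hScl]; exact h)
          have hle : ρ S ≤ ρ (S ∪ {z}) := pm_mono hpm Set.subset_union_left
          have h3 : ρ (S ∪ {z}) ≤ ρ T :=
            pm_mono hpm (Set.union_subset h1.1 (Set.singleton_subset_iff.mpr hzT))
          exact lt_of_lt_of_le (lt_of_le_of_ne hle (Ne.symm hne)) h3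
        obtain ⟨z', hz'S', hz'T⟩ := Set.exists_of_ssubset h2
        have hρT2 : ρ T < ρ S' := by
          have hne : ρ (T ∪ {z'}) ≠ ρ T := fun h => hz'T (by rw [← hT]; exact h)
          have hle : ρ T ≤ ρ (T ∪ {z'}) := pm_mono hpm Set.subset_union_left
          have h3 : ρ (T ∪ {z'}) ≤ ρ S' :=
            pm_mono hpm (Set.union_subset h2.1 (Set.singleton_subset_iff.mpr hz'S'))
          exact lt_of_lt_of_le (lt_of_le_of_ne hle (Ne.symm hne)) h3
        have hαT : letters α ⊆ T := hαS.trans h1.1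
        have hρα := G.rho_letters hpm hrep hα
        have hexy : ∃ y ∈ T, ρ (letters α ∪ {y}) ≠ ρ (letters α) := by
          by_contra hcon
          push_neg at hcon
          have hTsp : T ⊆ spanP ρ (letters α) := fun y hy => hcon y hy
          have h4 := pm_mono hpm hTsp
          rw [rho_spanP hpm, hρα] at h4
          rw [hρS] at hρT1
          linarith
        obtain ⟨y, hyT, hyne⟩ := hexy
        have hle0 : ρ (letters α) ≤ ρ (letters α ∪ {y}) :=
          pm_mono hpm Set.subset_union_left
        have hypos : 0 < ρ (letters α ∪ {y}) - ρ (letters α) := by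
          have := lt_of_le_of_ne hle0 (Ne.symm hyne)
          linarith
        have hynk : y ∉ G.kernel (letters α) := by
          intro hk
          have hsp := kernel_subset_spanP hpm hrep hC1 hα hk
          have : ρ (letters α ∪ {y}) = ρ (letters α) := hsp
          linarith
        have hylt : ρ (letters α ∪ {y}) - ρ (letters α) < 1 := by
          have hsubT : letters α ∪ {y} ⊆ T :=
            Set.union_subset hαT (Set.singleton_subset_iff.mpr hyT)
          have h5 := pm_mono hpm hsubT
          rw [hρS'] at hρT2
          linarith
        exact (hC α hα).2 ⟨y, hynk, hypos, hylt⟩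

end PaperPG
end

section
/- Let Λ be a normal greedoid over a finite alphabet Σ with an aligned polymatroid representation ρ. Fix x ∈ Σ and a word α with αx ∈ Λ. Then for every y ∈ Σ: if ρ(α̃ ∪ {x, y}) = ρ(α̃ ∪ {x}) and ρ(α̃ ∪ {y}) ≠ ρ(α̃), then ρ(α̃ ∪ {y}) = ρ(α̃) + 1. -/
namespace PaperPG

section Aux

variable {A : Type*}

lemma aux_letters_append (α : List A) (x : A) :
    letters (α ++ [x]) = letters α ∪ {x} := by
  ext z
  simp only [letters, Set.mem_setOf_eq, List.mem_append, List.mem_singleton, Set.mem_union,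
    Set.mem_singleton_iff]

lemma aux_mem_span {ρ : Set A → ℝ} (X : Set A) : X ⊆ spanP ρ X := by
  intro z hz
  show ρ (X ∪ {z}) = ρ X
  congr 1
  exact Set.union_eq_self_of_subset_right (Set.singleton_subset_iff.mpr hz)

lemma aux_span_subset_closed {ρ : Set A → ℝ} (hpm : IsPolymatroid ρ)
    {X S : Set A} (hXS : X ⊆ S) (hS : ClosedP ρ S) : spanP ρ X ⊆ S := by
  obtain ⟨-, hmono, hsub⟩ := hpm
  intro z hz
  have hz' : ρ (X ∪ {z}) = ρ X := hz
  have h1 := hsub S (X ∪ {z})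
  have h2 : S ∪ (X ∪ {z}) = S ∪ {z} := by
    rw [← Set.union_assoc, Set.union_eq_left.mpr hXS]
  have h3 : ρ X ≤ ρ (S ∩ (X ∪ {z})) :=
    hmono _ _ (Set.subset_inter hXS Set.subset_union_left)
  have h4 : ρ S ≤ ρ (S ∪ {z}) := hmono _ _ Set.subset_union_left
  have h5 : ρ (S ∪ {z}) = ρ S := by rw [h2] at h1; linarith
  have : z ∈ spanP ρ S := h5
  rwa [hS] at this

lemma aux_rho_span [Fintype A] {ρ : Set A → ℝ} (hpm : IsPolymatroid ρ)
    (X : Set A) : ρ (spanP ρ X) = ρ X := by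
  classical
  obtain ⟨-, hmono, hsub⟩ := hpm
  have key : ∀ T : Finset A, ↑T ⊆ spanP ρ X → ρ (X ∪ ↑T) = ρ X := by
    intro T
    induction T using Finset.induction_on with
    | empty => intro _; simp
    | @insert a T ha ih =>
      intro hT
      have haX : ρ (X ∪ {a}) = ρ X := hT (by simp)
      have hT' : ↑T ⊆ spanP ρ X := by
        intro z hz; exact hT (by simp [hz])
      have hXT : ρ (X ∪ ↑T) = ρ X := ih hT'
      have h1 := hsub (X ∪ ↑T) (X ∪ {a})
      have h2 : (X ∪ ↑T) ∪ (X ∪ {a}) = X ∪ ↑(insert a T) := by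
        simp only [Finset.coe_insert, Set.insert_eq]
        rw [Set.union_union_union_comm, Set.union_self, Set.union_comm ({a} : Set A) ↑T,
          ← Set.union_assoc]
      have h3 : ρ X ≤ ρ ((X ∪ ↑T) ∩ (X ∪ {a})) :=
        hmono _ _ (Set.subset_inter Set.subset_union_left Set.subset_union_left)
      have h4 : ρ X ≤ ρ (X ∪ ↑(insert a T)) := hmono _ _ Set.subset_union_left
      rw [h2] at h1
      linarith
  have hfin : (spanP ρ X).Finite := Set.toFinite _
  have := key hfin.toFinset (by rw [Set.Finite.coe_toFinset])
  rw [Set.Finite.coe_toFinset, Set.union_eq_right.mpr (aux_mem_span X)] at this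
  exact this

lemma aux_span_closed [Fintype A] {ρ : Set A → ℝ} (hpm : IsPolymatroid ρ)
    (X : Set A) : ClosedP ρ (spanP ρ X) := by
  apply Set.Subset.antisymm
  · intro z hz
    have hz' : ρ (spanP ρ X ∪ {z}) = ρ (spanP ρ X) := hz
    have hle : ρ (X ∪ {z}) ≤ ρ (spanP ρ X ∪ {z}) :=
      hpm.2.1 _ _ (Set.union_subset_union_left _ (aux_mem_span X))
    have hge : ρ X ≤ ρ (X ∪ {z}) := hpm.2.1 _ _ Set.subset_union_left
    have hsp : ρ (spanP ρ X) = ρ X := aux_rho_span ⟨hpm.1, hpm.2.1, hpm.2.2⟩ X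
    show ρ (X ∪ {z}) = ρ X
    linarith [hz'.le.trans_eq hsp]
  · exact aux_mem_span _

lemma aux_rho_letters {ρ : Set A → ℝ} {G : Greedoid A} (hrep : Represents ρ G)
    (hρ0 : ρ ∅ = 0) {α : List A} (hα : α ∈ G.lang) :
    ρ (letters α) = (α.length : ℝ) := by
  rcases eq_or_ne α [] with rfl | hne
  · have : letters ([] : List A) = ∅ := by ext z; simp [letters]
    simp [this, hρ0]
  · have hlen : α.length ≠ 0 := by simpa using hne
    obtain ⟨-, H⟩ := (hrep α).mp hα
    have := H (α.length - 1) (by omega)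
    rw [show α.length - 1 + 1 = α.length by omega, List.take_length] at this
    rw [this]
    push_cast
    have : (α.length : ℝ) - 1 + 1 = (α.length : ℝ) := by ring
    rw [Nat.cast_sub (by omega)]
    push_cast
    ring

namespace Greedoid

variable (G : Greedoid A)

lemma aux_len_lt_false {α β : List A} (hα : α ∈ G.lang) (hβ : β ∈ G.lang)
    (hc : G.cont α = G.cont β) (hlt : β.length < α.length) : False := by
  obtain ⟨z, hz, hbz⟩ := G.exchange α hα β hβ hlt
  have hz' : z ∈ G.cont β := hbz
  rw [← hc] at hz'
  have : (α ++ [z]).Nodup := G.simple _ hz'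
  rw [List.nodup_append] at this
  exact this.2.2 z hz z (by simp) rfl

lemma aux_len_eq {α β : List A} (hα : α ∈ G.lang) (hβ : β ∈ G.lang)
    (hc : G.cont α = G.cont β) : α.length = β.length := by
  rcases lt_trichotomy α.length β.length with h | h | h
  · exact absurd (G.aux_len_lt_false hβ hα hc.symm h) (by simp)
  · exact h
  · exact absurd (G.aux_len_lt_false hα hβ hc h) (by simp)

lemma aux_mem_flatOf {α β : List A} (hα : α ∈ G.lang) (hβ : β ∈ G.flatOf α) :
    β ∈ G.lang ∧ G.cont β = G.cont α := hβ

lemma aux_flatOf_len {α β : List A} (hα : α ∈ G.lang) (hβ : β ∈ G.flatOf α) :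
    β.length = α.length :=
  G.aux_len_eq hβ.1 hα hβ.2

lemma aux_flatOf_eq {α β : List A} (hc : G.cont β = G.cont α) :
    G.flatOf β = G.flatOf α := by
  ext w; simp only [flatOf, Set.mem_setOf_eq, hc]

lemma aux_flatCovBy {α : List A} {x : A} (hax : α ++ [x] ∈ G.lang) :
    G.flatCovBy (G.flatOf α) (G.flatOf (α ++ [x])) := by
  have hα : α ∈ G.lang := G.hereditary α [x] hax
  have hself : α ∈ G.flatOf α := ⟨hα, rfl⟩
  have hself' : α ++ [x] ∈ G.flatOf (α ++ [x]) := ⟨hax, rfl⟩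
  have hne : G.flatOf α ≠ G.flatOf (α ++ [x]) := by
    intro he
    have : (α ++ [x]) ∈ G.flatOf α := he ▸ hself'
    have := G.aux_flatOf_len hα this
    simp at this
  refine ⟨⟨⟨α, hself, [x], hax, hself'⟩, hne⟩, ?_⟩
  rintro E ⟨β₀, hβ₀, rfl⟩ ⟨⟨α', hα'F, γ, hαγ, hαγE⟩, hne1⟩ ⟨⟨β', hβ'E, δ, hβδ, hβδF'⟩, hne2⟩
  have hlα' : α'.length = α.length := G.aux_flatOf_len hα hα'F
  have hγ : γ ≠ [] := by
    rintro rfl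
    rw [List.append_nil] at hαγE
    exact hne1 ((G.aux_flatOf_eq hα'F.2).symm.trans (G.aux_flatOf_eq hαγE.2))
  have hδ : δ ≠ [] := by
    rintro rfl
    rw [List.append_nil] at hβδF'
    exact hne2 ((G.aux_flatOf_eq hβ'E.2).symm.trans (G.aux_flatOf_eq hβδF'.2))
  have hlβ' : β'.length = (α' ++ γ).length := by
    have h1 := (G.aux_mem_flatOf hβ₀ hβ'E).2
    have h2 := (G.aux_mem_flatOf hβ₀ hαγE).2
    exact G.aux_len_eq hβ'E.1 hαγ (h1.trans h2.symm)
  have hlβδ : (β' ++ δ).length = (α ++ [x]).length := G.aux_flatOf_len hax hβδF'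
  have h1 : 1 ≤ γ.length := List.length_pos_iff.mpr hγ
  have h2 : 1 ≤ δ.length := List.length_pos_iff.mpr hδ
  simp only [List.length_append, List.length_singleton] at hlβ' hlβδ
  omega

end Greedoid

end Aux

/-- If `αx ∈ Λ`, `ρ(α̃ ∪ {x,y}) = ρ(α̃ ∪ {x})` and `ρ(α̃ ∪ {y}) ≠ ρ(α̃)`, then
`ρ(α̃ ∪ {y}) = ρ(α̃) + 1`. -/
theorem step_implies_continuation {A : Type*} [Fintype A] (G : Greedoid A)
    (hnorm : G.Normal) (ρ : Set A → ℝ)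
    (hpm : IsPolymatroid ρ) (hrep : Represents ρ G) (hal : Aligned G ρ)
    (x : A) (α : List A) (hax : α ++ [x] ∈ G.lang) :
    ∀ y : A,
      ρ (letters α ∪ {x, y}) = ρ (letters α ∪ {x}) →
      ρ (letters α ∪ {y}) ≠ ρ (letters α) →
      ρ (letters α ∪ {y}) = ρ (letters α) + 1 := by
  intro y hy1 hy2
  classical
  obtain ⟨hρ0, hmono, hsubm⟩ := hpm
  have hpm' : IsPolymatroid ρ := ⟨hρ0, hmono, hsubm⟩
  have hα : α ∈ G.lang := G.hereditary α [x] hax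
  obtain ⟨φ, hφcl, hφmono, hφrk, hφsub, hφcov⟩ := hal
  set F := G.flatOf α with hF
  set F' := G.flatOf (α ++ [x]) with hF'
  have hFflat : G.IsFlat F := ⟨α, hα, rfl⟩
  have hF'flat : G.IsFlat F' := ⟨α ++ [x], hax, rfl⟩
  -- rank facts
  have hra : ρ (letters α) = (α.length : ℝ) := aux_rho_letters hrep hρ0 hα
  have hrax : ρ (letters α ∪ {x}) = (α.length : ℝ) + 1 := by
    have := aux_rho_letters hrep hρ0 hax
    rw [aux_letters_append] at this
    rw [this, List.length_append, List.length_singleton]; push_cast; ring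
  -- φ facts
  have hρφF : ρ (φ F) = ρ (letters α) := (hφrk α hα).symm
  have hρφF' : ρ (φ F') = ρ (letters α ∪ {x}) := by
    have := (hφrk (α ++ [x]) hax).symm
    rwa [aux_letters_append] at this
  have hαφF : letters α ⊆ φ F := hφsub α hα
  have haxφF' : letters α ∪ {x} ⊆ φ F' := by
    have := hφsub (α ++ [x]) hax
    rwa [aux_letters_append] at this
  have hφFcl : ClosedP ρ (φ F) := hφcl F hFflat
  have hφF'cl : ClosedP ρ (φ F') := hφcl F' hF'flat
  -- the cover
  have hcov : closedCovBy ρ (φ F) (φ F') :=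
    hφcov F F' hFflat hF'flat (G.aux_flatCovBy hax)
  -- y ∈ φ F'
  have hyspan : y ∈ spanP ρ (letters α ∪ {x}) := by
    show ρ ((letters α ∪ {x}) ∪ {y}) = ρ (letters α ∪ {x})
    rw [Set.union_assoc, Set.singleton_union]; exact hy1
  have hyF' : y ∈ φ F' := aux_span_subset_closed hpm' haxφF' hφF'cl hyspan
  -- y ∉ φ F
  have hyF : y ∉ φ F := by
    intro hy
    have hsub2 : letters α ∪ {y} ⊆ φ F :=
      Set.union_subset hαφF (Set.singleton_subset_iff.mpr hy)
    have h1 : ρ (letters α ∪ {y}) ≤ ρ (φ F) := hmono _ _ hsub2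
    have h2 : ρ (letters α) ≤ ρ (letters α ∪ {y}) := hmono _ _ Set.subset_union_left
    exact hy2 (le_antisymm (h1.trans_eq hρφF) h2)
  -- the intermediate closed set
  set S := spanP ρ (φ F ∪ {y}) with hS
  have hScl : ClosedP ρ S := aux_span_closed hpm' _
  have hρS : ρ S = ρ (φ F ∪ {y}) := aux_rho_span hpm' _
  have hFleF' : φ F ⊆ φ F' :=
    hφmono F F' hFflat hF'flat ⟨α, ⟨hα, rfl⟩, [x], hax, ⟨hax, rfl⟩⟩
  have hsub1 : φ F ⊆ S := fun z hz => aux_mem_span _ (Or.inl hz)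
  have hFS : φ F ⊂ S :=
    (Set.ssubset_iff_of_subset hsub1).mpr ⟨y, aux_mem_span _ (by simp), hyF⟩
  have hSF' : S ⊆ φ F' :=
    aux_span_subset_closed hpm'
      (Set.union_subset hFleF' (Set.singleton_subset_iff.mpr hyF')) hφF'cl
  have hSeq : S = φ F' := by
    by_contra hne
    exact hcov.2.2.2 S hScl hFS (Set.ssubset_iff_subset_ne.mpr ⟨hSF', hne⟩)
  -- rank of φ F ∪ {y}
  have hρFy : ρ (φ F ∪ {y}) = (α.length : ℝ) + 1 := by
    rw [← hρS, hSeq, hρφF', hrax]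
  -- submodularity
  have h1 := hsubm (φ F) (letters α ∪ {y})
  have h2 : φ F ∪ (letters α ∪ {y}) = φ F ∪ {y} := by
    rw [← Set.union_assoc, Set.union_eq_left.mpr hαφF]
  have h3 : ρ (letters α) ≤ ρ (φ F ∩ (letters α ∪ {y})) :=
    hmono _ _ (Set.subset_inter hαφF Set.subset_union_left)
  rw [h2, hρFy, hρφF, hra] at h1
  rw [hra] at h3
  -- upper bound
  have h4 : ρ (letters α ∪ {y}) ≤ ρ (letters α ∪ {x, y}) := by
    apply hmono
    apply Set.union_subset_union_right
    intro z hz; simp at hz; simp [hz]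
  rw [hy1, hrax] at h4
  rw [hra]
  linarith

end PaperPG
end
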